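/- arXiv:2602.20769 — 2 statements merged into one kernel-verified Lean document; each statement's English description precedes it below -/
import Mathlib

section
/- Let V and H be real Hilbert spaces, let j : V → H be a continuous linear map (modelling the embedding V ↪ H of a Gelfand triple, under which the duality pairing ⟨·,·⟩_{V*,V} of elements of H against elements of V is realized as the H-inner product ⟪j·, j·⟫_H). Let B : V × V → ℝ be a continuous bilinear form satisfying the quasi-coercivity bound B(v,v) ≥ α‖v‖_V² − ω‖j v‖_H² for all v ∈ V, where α > 0 and ω ≥ 0. Let I : H → H be a continuous linear map and C > 0, δ > 0 constants such that ⟪x − I x, j g⟫_H ≤ C δ ‖x‖_H ‖g‖_V for all x ∈ H and g ∈ V. Then for every ε > 0, every μ ≥ 0 and every v ∈ V one has B(v,v) + μ ⟪I(j v), j v⟫_H ≥ (α − ε) ‖v‖_V² + (μ − C² μ² δ² / (4ε) − ω) ‖j v‖_H². -/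
/-!
Write `⟪I x, x⟫ = ‖x‖² - ⟪x - I x, x⟫` with `x = j v`; the approximation property of `I` bounds
the defect by `C δ ‖j v‖ ‖v‖`, and Young's inequality splits `μ C δ ‖j v‖ ‖v‖` into
`ε ‖v‖²`, absorbed by the coercivity of `B`, and `C² μ² δ² / (4ε) ‖j v‖²`.
-/

open scoped RealInnerProductSpace

theorem mul_le_mul_sq_add_sq_div {ε : ℝ} (hε : 0 < ε) (a b : ℝ) :
    a * b ≤ ε * b ^ 2 + a ^ 2 / (4 * ε) := by
  have hsq : ε * b ^ 2 + a ^ 2 / (4 * ε) - a * b = (2 * ε * b - a) ^ 2 / (4 * ε) := by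
    field_simp
    ring
  have : 0 ≤ (2 * ε * b - a) ^ 2 / (4 * ε) := by positivity
  linarith

theorem norm_sq_sub_le_inner_map_self {V H : Type*} [Norm V]
    [NormedAddCommGroup H] [InnerProductSpace ℝ H] (j : V → H) (I : H → H) (C δ : ℝ)
    (hI : ∀ (x : H) (g : V), ⟪x - I x, j g⟫ ≤ C * δ * ‖x‖ * ‖g‖) (v : V) :
    ‖j v‖ ^ 2 - C * δ * ‖j v‖ * ‖v‖ ≤ ⟪I (j v), j v⟫ := by
  have hsplit : ⟪I (j v), j v⟫ = ‖j v‖ ^ 2 - ⟪j v - I (j v), j v⟫ := by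
    rw [inner_sub_left, real_inner_self_eq_norm_sq]
    ring
  linarith [hI (j v) v]

theorem stmt_0_general
    {V H : Type*} [NormedAddCommGroup V] [InnerProductSpace ℝ V]
    [NormedAddCommGroup H] [InnerProductSpace ℝ H]
    (j : V →L[ℝ] H)
    (B : V →L[ℝ] V →L[ℝ] ℝ)
    (α ω : ℝ)
    (hB : ∀ v : V, B v v ≥ α * ‖v‖ ^ 2 - ω * ‖j v‖ ^ 2)
    (I : H →L[ℝ] H) (C δ : ℝ)
    (hI : ∀ (x : H) (g : V), ⟪x - I x, j g⟫ ≤ C * δ * ‖x‖ * ‖g‖) :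
    ∀ ε > (0 : ℝ), ∀ μ ≥ (0 : ℝ), ∀ v : V,
      B v v + μ * ⟪I (j v), j v⟫ ≥
        (α - ε) * ‖v‖ ^ 2 + (μ - C ^ 2 * μ ^ 2 * δ ^ 2 / (4 * ε) - ω) * ‖j v‖ ^ 2 := by
  intro ε hε μ hμ v
  have hnudge := mul_le_mul_of_nonneg_left (norm_sq_sub_le_inner_map_self j I C δ hI v) hμ
  have hyoung := mul_le_mul_sq_add_sq_div hε (μ * C * δ * ‖j v‖) ‖v‖
  have hsq : (μ * C * δ * ‖j v‖) ^ 2 / (4 * ε) =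
      C ^ 2 * μ ^ 2 * δ ^ 2 / (4 * ε) * ‖j v‖ ^ 2 := by
    ring
  linarith [hB v]

/-- Coercivity computation for the nudged operator `A + μ I_δ`. -/
theorem stmt_0
    {V H : Type*} [NormedAddCommGroup V] [InnerProductSpace ℝ V] [CompleteSpace V]
    [NormedAddCommGroup H] [InnerProductSpace ℝ H] [CompleteSpace H]
    (j : V →L[ℝ] H)
    (B : V →L[ℝ] V →L[ℝ] ℝ)
    (α ω : ℝ) (hα : 0 < α) (hω : 0 ≤ ω)
    (hB : ∀ v : V, B v v ≥ α * ‖v‖ ^ 2 - ω * ‖j v‖ ^ 2)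
    (I : H →L[ℝ] H) (C δ : ℝ) (hC : 0 < C) (hδ : 0 < δ)
    (hI : ∀ (x : H) (g : V), ⟪x - I x, j g⟫ ≤ C * δ * ‖x‖ * ‖g‖) :
    ∀ ε > (0 : ℝ), ∀ μ ≥ (0 : ℝ), ∀ v : V,
      B v v + μ * ⟪I (j v), j v⟫ ≥
        (α - ε) * ‖v‖ ^ 2 + (μ - C ^ 2 * μ ^ 2 * δ ^ 2 / (4 * ε) - ω) * ‖j v‖ ^ 2 :=
  stmt_0_general j B α ω hB I C δ hI
end

section
/- Let V and H be real Hilbert spaces, let j : V → H be a continuous linear map (modelling the embedding V ↪ H of a Gelfand triple, under which the duality pairing ⟨·,·⟩_{V*,V} of elements of H against elements of V is realized as the H-inner product ⟪j·, j·⟫_H). Let B : V × V → ℝ be a continuous bilinear form satisfying B(v,v) ≥ α‖v‖_V² − ω‖j v‖_H² for all v ∈ V, where α > 0 and ω ≥ 0. Let I : H → H be a continuous linear map and C > 0, δ > 0 constants such that ⟪x − I x, j g⟫_H ≤ C δ ‖x‖_H ‖g‖_V for all x ∈ H and g ∈ V. If the nudging parameter μ satisfies μ > ω and the resolution satisfies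 δ² ≤ 2α(μ − ω)/(C² μ²), then the nudged form is coercive with no lower-order defect: B(v,v) + μ ⟪I(j v), j v⟫_H ≥ (α/2) ‖v‖_V² for all v ∈ V. In particular, the operator v ↦ A v + μ I_δ v satisfies assumption (A1) with ω = 0. -/
open scoped RealInnerProductSpace

/-!
Splitting `⟪I x, x⟫ = ‖x‖² - ⟪x - I x, x⟫` and using the approximation bound, the nudging term
contributes `μ ‖j v‖² - μ C δ ‖j v‖ ‖v‖`. Together with the Gårding inequality this leaves
`α ‖v‖² + (μ - ω) ‖j v‖² - μ C δ ‖v‖ ‖j v‖`, and the resolution condition is exactly what lets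
Young's inequality absorb the cross term into `(μ - ω) ‖j v‖² + (α / 2) ‖v‖²`.
-/

-- Young: `c a b ≤ κ b² + c² a² / (4κ)`, and `c² / (4κ) ≤ α / 2`.
theorem half_mul_sq_le_of_cross_term_sq_le {α κ c : ℝ} (hκ : 0 < κ) (hc : c ^ 2 ≤ 2 * α * κ)
    (a b : ℝ) : α / 2 * a ^ 2 ≤ α * a ^ 2 + κ * b ^ 2 - c * a * b := by
  have hsq : 0 ≤ (2 * κ * b - c * a) ^ 2 := sq_nonneg _
  have hca : c ^ 2 * a ^ 2 ≤ 2 * α * κ * a ^ 2 := mul_le_mul_of_nonneg_right hc (sq_nonneg a)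
  nlinarith

theorem sq_mul_le_of_sq_le_div {a x y : ℝ} (ha : 0 ≤ a) (h : x ^ 2 ≤ a / y ^ 2) :
    (y * x) ^ 2 ≤ a := by
  rcases eq_or_ne y 0 with rfl | hy
  · simpa using ha
  · rw [mul_pow, mul_comm]
    exact (le_div_iff₀ (by positivity)).mp h

theorem stmt_1_general
    {V H : Type*} [NormedAddCommGroup V] [InnerProductSpace ℝ V] [CompleteSpace V]
    [NormedAddCommGroup H] [InnerProductSpace ℝ H] [CompleteSpace H]
    (j : V →L[ℝ] H)
    (B : V →L[ℝ] V →L[ℝ] ℝ)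
    (α ω : ℝ) (hα : 0 < α) (hω : 0 ≤ ω)
    (hB : ∀ v : V, B v v ≥ α * ‖v‖ ^ 2 - ω * ‖j v‖ ^ 2)
    (I : H →L[ℝ] H) (C δ : ℝ)
    (hI : ∀ (x : H) (g : V), ⟪x - I x, j g⟫ ≤ C * δ * ‖x‖ * ‖g‖)
    (μ : ℝ) (hμ : μ > ω) (hδμ : δ ^ 2 ≤ 2 * α * (μ - ω) / (C ^ 2 * μ ^ 2)) :
    ∀ v : V, B v v + μ * ⟪I (j v), j v⟫ ≥ (α / 2) * ‖v‖ ^ 2 := by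
  intro v
  have hκ : 0 < μ - ω := sub_pos.mpr hμ
  have hIv : ‖j v‖ ^ 2 - C * δ * ‖j v‖ * ‖v‖ ≤ ⟪I (j v), j v⟫ := by
    have h := hI (j v) v
    rw [inner_sub_left, real_inner_self_eq_norm_sq] at h
    linarith
  have hconst : (C * μ * δ) ^ 2 ≤ 2 * α * (μ - ω) :=
    sq_mul_le_of_sq_le_div (by positivity) (by rwa [mul_pow])
  calc (α / 2) * ‖v‖ ^ 2
      ≤ α * ‖v‖ ^ 2 + (μ - ω) * ‖j v‖ ^ 2 - C * μ * δ * ‖v‖ * ‖j v‖ :=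
        half_mul_sq_le_of_cross_term_sq_le hκ hconst _ _
    _ = (α * ‖v‖ ^ 2 - ω * ‖j v‖ ^ 2) + μ * (‖j v‖ ^ 2 - C * δ * ‖j v‖ * ‖v‖) := by ring
    _ ≤ B v v + μ * ⟪I (j v), j v⟫ := by
        gcongr
        · exact hB v
        · exact hω.trans hμ.le

/-- Coercivity (with no lower-order defect) of the nudged form for suitable `μ`, `δ`. -/
theorem stmt_1
    {V H : Type*} [NormedAddCommGroup V] [InnerProductSpace ℝ V] [CompleteSpace V]
    [NormedAddCommGroup H] [InnerProductSpace ℝ H] [CompleteSpace H]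
    (j : V →L[ℝ] H)
    (B : V →L[ℝ] V →L[ℝ] ℝ)
    (α ω : ℝ) (hα : 0 < α) (hω : 0 ≤ ω)
    (hB : ∀ v : V, B v v ≥ α * ‖v‖ ^ 2 - ω * ‖j v‖ ^ 2)
    (I : H →L[ℝ] H) (C δ : ℝ) (hC : 0 < C) (hδ : 0 < δ)
    (hI : ∀ (x : H) (g : V), ⟪x - I x, j g⟫ ≤ C * δ * ‖x‖ * ‖g‖)
    (μ : ℝ) (hμ : μ > ω) (hδμ : δ ^ 2 ≤ 2 * α * (μ - ω) / (C ^ 2 * μ ^ 2)) :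
    ∀ v : V, B v v + μ * ⟪I (j v), j v⟫ ≥ (α / 2) * ‖v‖ ^ 2 :=
  stmt_1_general j B α ω hα hω hB I C δ hI μ hμ hδμ
end
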